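/- Let X be a set of ordinals and η the least ordinal with X ⊆ η. Then X is a closed subset of η (with η carrying the order topology) if and only if X, with the subspace topology induced from η, is order-homeomorphic to its order type (i.e., the order isomorphism from the order type of X to X is a homeomorphism). -/

import Mathlib

/-! An order isomorphism between spaces carrying their order topologies is a homeomorphism, and
`Iio o` carries its order topology; so `X` is order-homeomorphic to its order type exactly when the
subspace topology of `X` is its own order topology. In a well order this happens iff every limit
point `x` of `X` lying below some `c ∈ X` belongs to `X`: then `X ∩ Ioi b` is the order-open ray
above `sSup (X ∩ Iic b) ∈ X`, while a missing such `x` makes the least element of `X` above `x` a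
limit of `X ∩ Iio x` for the order topology of `X` but not for the subspace topology. Since `η` is
the least strict upper bound of `X`, the limit points below some `c ∈ X` are exactly the limit
points below `η`, so this condition is closedness of `X` in `η`. -/

open Set Ordinal
open scoped Cardinal

/-- Natural (Hessenberg) addition of ordinals (removed from Mathlib; old definition restored). -/
noncomputable def Ordinal.nadd (a b : Ordinal.{0}) : Ordinal.{0} :=
  max (⨆ x : Iio a, Order.succ (Ordinal.nadd x.1 b)) (⨆ x : Iio b, Order.succ (Ordinal.nadd a x.1))
termination_by (a, b)
decreasing_by
  · exact Prod.Lex.left _ _ x.2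
  · exact Prod.Lex.right _ x.2

infixl:65 " ♯ " => Ordinal.nadd

noncomputable section

/-- Derived set (non-isolated points) of a set of ordinals, as a subspace. -/
def deriv' (s : Set Ordinal.{0}) : Set Ordinal.{0} := {x ∈ s | x ∈ closure (s \ {x})}

/-- Iterated Cantor–Bendixson derivative. -/
def iterDeriv (s : Set Ordinal.{0}) (o : Ordinal.{0}) : Set Ordinal.{0} :=
  Ordinal.limitRecOn o s (fun _ ih => deriv' ih) (fun o _ ih => ⋂ (p : Ordinal.{0}) (h : p < o), ih p h)

/-- `s` contains a homeomorphic copy of the ordinal `α` (with its order topology). -/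
def HomeoCopy (α : Ordinal.{0}) (s : Set Ordinal.{0}) : Prop :=
  ∃ t : Set Ordinal, t ⊆ s ∧ Nonempty ((Iio α : Set Ordinal.{0}) ≃ₜ t)

/-- Two ordinals are biembeddable: each is homeomorphic to a subspace of the other. -/
def Biembed (α β : Ordinal.{0}) : Prop := HomeoCopy α (Iio β) ∧ HomeoCopy β (Iio α)

/-- Two sets of ordinals are order-homeomorphic: there is an order-preserving homeomorphism. -/
def OrderHomeo (X Y : Set Ordinal.{0}) : Prop :=
  ∃ e : X ≃ₜ Y, ∀ a b : X, a ≤ b ↔ e a ≤ e b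

/-- An ordinal is order-reinforcing. -/
def OrderReinforcing (α : Ordinal.{0}) : Prop :=
  ∀ X : Set Ordinal, Nonempty ((Iio α : Set Ordinal.{0}) ≃ₜ X) → ∃ Y ⊆ X, OrderHomeo (Iio α) Y

/-- The Cantor–Bendixson rank of an ordinal: the least exponent in its Cantor normal form. -/
def CB (x : Ordinal.{0}) : Ordinal := if x = 0 then 0 else sSup {γ | (ω : Ordinal.{0}) ^ γ ∣ x}

/-- The natural (Hessenberg) sum of a finite family of ordinals. -/
def natSumFam {k : ℕ} (α : Fin k → Ordinal.{0}) : Ordinal := (List.ofFn α).foldr (· ♯ ·) 0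

/-- The Milner–Rado sum of a finite family of ordinals. -/
def mrSumFam {k : ℕ} (α : Fin k → Ordinal.{0}) : Ordinal :=
  sInf {δ | ∀ β : Fin k → Ordinal, (∀ i, β i < α i) → δ ≠ natSumFam β}

/-- The topological pigeonhole relation `β → (top α i)¹` for finitely many colours. -/
def TopPH {k : ℕ} (β : Ordinal.{0}) (α : Fin k → Ordinal.{0}) : Prop :=
  ∀ c : Ordinal → Fin k, ∃ i, HomeoCopy (α i) (Iio β ∩ c ⁻¹' {i})

/-- The topological pigeonhole relation with an arbitrary index type of colours. -/
def TopPHFam {ι : Type*} (β : Ordinal.{0}) (α : ι → Ordinal.{0}) : Prop :=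
  ∀ c : Ordinal → ι, ∃ i, HomeoCopy (α i) (Iio β ∩ c ⁻¹' {i})

/-- `ω̄[γ, m]`: `ω ^ γ * m + 1` if `γ > 0`, and `m` if `γ = 0`. -/
def obar (γ : Ordinal.{0}) (m : ℕ) : Ordinal := if γ = 0 then (m : Ordinal.{0}) else ω ^ γ * m + 1

/-- `C` is closed and unbounded in `o`. -/
def IsClubIn (C : Set Ordinal.{0}) (o : Ordinal.{0}) : Prop :=
  C ⊆ Iio o ∧ (∀ x < o, ∃ y ∈ C, x ≤ y) ∧
    ∀ x < o, x ≠ 0 → (∀ y < x, ∃ z ∈ C, y < z ∧ z < x) → x ∈ C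

/-- `S` is stationary in `o`: it meets every club subset of `o`. -/
def StationaryIn (S : Set Ordinal.{0}) (o : Ordinal.{0}) : Prop :=
  ∀ C, IsClubIn C o → (S ∩ C).Nonempty

section WellOrder

variable {α : Type*} [TopologicalSpace α] {S : Set α}

theorem closure_inter_Iio_subset_of_orderTopology [LinearOrder α] [WellFoundedLT α]
    [OrderTopology α] [OrderTopology S] {c : α} (hc : c ∈ S) :
    closure S ∩ Iio c ⊆ S := by
  rintro x ⟨hxS, hxc⟩
  by_contra hx
  obtain ⟨d, ⟨hdS, hxd⟩, hd⟩ := wellFounded_lt.has_min (S ∩ Ioi x) ⟨c, hc, hxc⟩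
  set T := S ∩ Iio x
  have hST : S ⊆ T ∪ Ici d := fun s hs => by
    rcases lt_trichotomy s x with h | rfl | h
    exacts [Or.inl ⟨hs, h⟩, (hx hs).elim, Or.inr (not_lt.1 (hd s ⟨hs, h⟩))]
  have hxT : x ∈ closure T := by
    have := closure_mono hST hxS
    rw [closure_union, isClosed_Ici.closure_eq] at this
    exact this.resolve_right (not_le.2 hxd)
  have hlub : IsLUB (Subtype.val ⁻¹' T : Set S) ⟨d, hdS⟩ := by
    refine ⟨fun s hs => (hs.2.trans hxd).le, fun u hu => not_lt.1 fun hud => hx ?_⟩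
    have hux : (u : α) ≤ x := not_lt.1 fun h => hd u ⟨u.2, h⟩ hud
    have hTu : T ⊆ Iic (u : α) := fun t ht => hu (show (⟨t, ht.1⟩ : S) ∈ Subtype.val ⁻¹' T from ht)
    have hxu : x ≤ u := closure_minimal hTu isClosed_Iic hxT
    exact le_antisymm hxu hux ▸ u.2
  have hTne : (Subtype.val ⁻¹' T : Set S).Nonempty := by
    obtain ⟨t, ht⟩ := closure_nonempty_iff.1 ⟨x, hxT⟩
    exact ⟨⟨t, ht.1⟩, ht⟩
  have hdT : d ∈ closure T :=
    map_mem_closure continuous_subtype_val (hlub.mem_closure hTne) fun _ ht => ht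
  exact (closure_minimal (fun t ht => ht.2.le) isClosed_Iic hdT).not_gt hxd

variable [ConditionallyCompleteLinearOrder α] [WellFoundedLT α] [OrderTopology α]

theorem orderTopology_of_closure_inter_Iio_subset (hS : ∀ c ∈ S, closure S ∩ Iio c ⊆ S) :
    OrderTopology S := by
  refine ⟨le_antisymm (induced_topology_le_preorder Iff.rfl) ?_⟩
  show Preorder.topology S ≤ .induced Subtype.val _
  let _ := Preorder.topology S
  have : OrderTopology S := ⟨rfl⟩
  rw [OrderTopology.topology_eq_generate_intervals (α := α),
    show Preorder.topology α = .generateFrom {s | ∃ a, s = Ioi a ∨ s = Iio a} from rfl,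
    induced_generateFrom_eq]
  refine le_generateFrom ?_
  rintro _ ⟨_, ⟨b, rfl | rfl⟩, rfl⟩
  · rcases (S ∩ Iic b).eq_empty_or_nonempty with hlow | hlow
    · convert isOpen_univ
      ext s
      simpa using fun h => hlow.subset ⟨s.2, h⟩
    by_cases hhigh : ∃ c ∈ S, b < c
    · obtain ⟨c, hcS, hbc⟩ := hhigh
      have hbdd : BddAbove (S ∩ Iic b) := ⟨b, fun _ h => h.2⟩
      have hmb : sSup (S ∩ Iic b) ≤ b := csSup_le hlow fun _ h => h.2
      have hmS : sSup (S ∩ Iic b) ∈ S := hS c hcS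
        ⟨closure_mono inter_subset_left (csSup_mem_closure hlow hbdd), hmb.trans_lt hbc⟩
      convert isOpen_Ioi (a := (⟨_, hmS⟩ : S))
      ext s
      refine ⟨fun h => hmb.trans_lt h, fun h => not_le.1 fun hsb => ?_⟩
      exact (le_csSup hbdd ⟨s.2, hsb⟩).not_gt h
    · convert isOpen_empty
      ext s
      simpa using fun h => hhigh ⟨s, s.2, h⟩
  · rcases (S ∩ Ici b).eq_empty_or_nonempty with hhigh | hhigh
    · convert isOpen_univ
      ext s
      simpa using fun h => hhigh.subset ⟨s.2, h⟩
    obtain ⟨d, ⟨hdS, hbd⟩, hd⟩ := wellFounded_lt.has_min _ hhigh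
    convert isOpen_Iio (a := (⟨d, hdS⟩ : S))
    ext s
    exact ⟨fun h => h.trans_le hbd, fun h => not_le.1 fun hbs => hd s ⟨s.2, hbs⟩ h⟩

theorem orderTopology_subtype_iff :
    OrderTopology S ↔ ∀ c ∈ S, closure S ∩ Iio c ⊆ S :=
  ⟨fun _ _ hc => closure_inter_Iio_subset_of_orderTopology hc,
    orderTopology_of_closure_inter_Iio_subset⟩

end WellOrder

theorem isClosed_preimage_val_Iio_iff {α : Type*} [LinearOrder α] [TopologicalSpace α]
    {S : Set α} {η : α} (hη : IsLeast {e | ∀ x ∈ S, x < e} η) :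
    IsClosed (Subtype.val ⁻¹' S : Set (Iio η)) ↔ ∀ c ∈ S, closure S ∩ Iio c ⊆ S := by
  have hSη : S ⊆ Iio η := hη.1
  rw [isClosed_preimage_val, inter_eq_right.2 hSη]
  refine ⟨fun h c hc x hx => h ⟨hx.2.trans (hη.1 c hc), hx.1⟩, fun h x ⟨hxη, hx⟩ => ?_⟩
  by_contra hxS
  obtain ⟨c, hcS, hxc⟩ : ∃ c ∈ S, x < c := by
    by_contra! hle
    exact (hη.2 fun y hy => (hle y hy).lt_of_ne fun hyx => hxS (hyx ▸ hy)).not_gt hxη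
  exact hxS (h c hcS ⟨hx, hxc⟩)

theorem OrderTopology.of_homeomorph {α β : Type*} [LinearOrder α] [TopologicalSpace α]
    [OrderTopology α] [LinearOrder β] [TopologicalSpace β] (e : α ≃ₜ β)
    (he : ∀ a b, a ≤ b ↔ e a ≤ e b) : OrderTopology β := by
  have hlt : ∀ {a b : β}, e.symm a < e.symm b ↔ a < b := fun {a b} => by
    simp only [lt_iff_le_not_ge, he, Homeomorph.apply_symm_apply]
  refine ⟨e.symm.isInducing.eq_induced.trans (induced_topology_eq_preorder hlt ?_ ?_)⟩
  · exact fun {_ b _} hb _ => ⟨e b, hlt.1 (by simpa using hb), by simp⟩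
  · exact fun {_ b _} hb _ => ⟨e b, hlt.1 (by simpa using hb), by simp⟩

theorem Ordinal.exists_orderIso_Iio_of_bddAbove {s : Set Ordinal.{u}} (hs : BddAbove s) :
    ∃ o : Ordinal.{u}, Nonempty (Iio o ≃o s) := by
  obtain ⟨b, hb⟩ := hs
  have hle : typeLT s ≤ lift.{u + 1} (Order.succ b) := by
    rw [← type_lt_Iio]
    have hsub : s ⊆ Iio (Order.succ b) := fun x hx => Order.lt_succ_of_le (hb hx)
    exact (Subrel.inclusionEmbedding (· < ·) hsub).ordinal_type_le
  obtain ⟨o, ho⟩ := mem_range_lift_of_le hle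
  rw [← type_lt_Iio] at ho
  exact ⟨o, ⟨OrderIso.ofRelIsoLT (type_eq.1 ho).some⟩⟩

theorem Ordinal.exists_orderHomeo_Iio_iff_orderTopology {X : Set Ordinal.{0}} (hX : BddAbove X) :
    (∃ o, OrderHomeo (Iio o) X) ↔ OrderTopology X := by
  refine ⟨fun ⟨_, e, he⟩ => .of_homeomorph e he, fun _ => ?_⟩
  obtain ⟨o, ⟨f⟩⟩ := exists_orderIso_Iio_of_bddAbove hX
  exact ⟨o, f.toHomeomorph, fun _ _ => f.le_iff_le.symm⟩

/-- A set of ordinals is closed in the least ordinal containing it iff it is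
order-homeomorphic to its order type. -/
theorem isClosed_iff_orderHomeo_type (X : Set Ordinal.{0}) (η : Ordinal.{0})
    (hη : IsLeast {e : Ordinal.{0} | ∀ x ∈ X, x < e} η) :
    IsClosed {x : (Iio η : Set Ordinal.{0}) | (x : Ordinal.{0}) ∈ X} ↔
      ∃ o : Ordinal.{0}, OrderHomeo (Iio o) X := by
  have hX : BddAbove X := ⟨η, fun x hx => (hη.1 x hx).le⟩
  calc _ ↔ ∀ c ∈ X, closure X ∩ Iio c ⊆ X := isClosed_preimage_val_Iio_iff hη
    _ ↔ OrderTopology X := orderTopology_subtype_iff.symm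
    _ ↔ _ := (exists_orderHomeo_Iio_iff_orderTopology hX).symm

end
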